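/- Let (ω_l)_{l∈ℕ} be i.i.d. Bernoulli(p), p ∈ (0,1), α ∈ (1,∞), and S_N(ω) = ∑_{0<j_1<...<j_N, ω_{j_1}=...=ω_{j_N}=1} ∏_{i=1}^N (j_i-j_{i-1})^{-α}. Then almost surely, for every β ∈ (1/α, 1], limsup_{N→∞} (1/N) log S_N(ω) ≤ (1/β)(log p + log ζ(αβ)). -/

import Mathlib

/-!
For `β ≤ 1` the map `x ↦ x^β` is subadditive, so `S_N^β` is at most the sum of the `β`-th powers
of the terms of `S_N`. A tuple `j` contributes with probability `p^N`, and an increasing tuple is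
determined by its gaps, so `E[S_N^β] ≤ (p ζ(αβ))^N`. By Markov's inequality and Borel–Cantelli,
almost surely `S_N < e^{cN}` eventually, for all rational `β` and all rational
`c > (log p + log ζ(αβ))/β` at once; the bound is continuous in `β`, which gives every `β`.

This bounds the real `limsup` only because `S_N` is not too small: by the strong law of large
numbers the `N`-th one of `ω` sits below `2N/p`, and the term of `S_N` at the first `N` ones is at
least `e^{-2αN/p}`.
-/

open MeasureTheory ProbabilityTheory Filter
open scoped ENNReal Classical

noncomputable section

/-- `j_{i-1}`, with the convention `j_0 = 0`. -/
def prevJ {N : ℕ} (j : Fin N → ℕ) (i : Fin N) : ℕ :=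
  if _h : (i : ℕ) = 0 then 0
  else j ⟨(i : ℕ) - 1, lt_of_le_of_lt (Nat.sub_le _ _) i.2⟩

/-- The renewal sum `S_N(ω) = ∑_{0<j_1<⋯<j_N, ω_{j_i}=1 ∀i} ∏_i (j_i-j_{i-1})^{-α}`. -/
def SN (α : ℝ) (N : ℕ) (ω : ℕ → Bool) : ℝ≥0∞ :=
  ∑' j : Fin N → ℕ,
    if (∀ i, prevJ j i < j i) ∧ (∀ i, ω (j i) = true)
    then ∏ i, ((j i - prevJ j i : ℕ) : ℝ≥0∞) ^ (-α) else 0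

/-- Riemann's `ζ(s) = ∑_{n ≥ 1} n^{-s}`, real-valued. -/
def zetaR (s : ℝ) : ℝ := ∑' n : ℕ, ((n + 1 : ℕ) : ℝ) ^ (-s)

open Topology

lemma ENNReal.tsum_pi_prod_eq_pow {α : Type*} (f : α → ℝ≥0∞) (N : ℕ) :
    ∑' g : Fin N → α, ∏ i, f (g i) = (∑' a, f a) ^ N := by
  induction N with
  | zero => simp
  | succ n ih =>
    rw [← (Fin.consEquiv fun _ => α).tsum_eq, ENNReal.tsum_prod', pow_succ', ← ih,
      ← ENNReal.tsum_mul_right]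
    refine tsum_congr fun a => ?_
    simp [Fin.consEquiv, Fin.prod_univ_succ, ENNReal.tsum_mul_left]

lemma ENNReal.tsum_rpow_le_tsum_rpow {ι : Type*} (f : ι → ℝ≥0∞) {β : ℝ} (hβ0 : 0 < β)
    (hβ1 : β ≤ 1) : (∑' i, f i) ^ β ≤ ∑' i, f i ^ β := by
  rw [ENNReal.tsum_eq_iSup_sum, ← ENNReal.le_rpow_inv_iff hβ0]
  refine iSup_le fun s => (ENNReal.le_rpow_inv_iff hβ0).2 ?_
  exact (Finset.le_sum_of_subadditive (· ^ β) (ENNReal.zero_rpow_of_pos hβ0).le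
    (fun x y => ENNReal.rpow_add_le_add_rpow x y hβ0.le hβ1) s f).trans (ENNReal.sum_le_tsum s)

theorem ae_eventually_lt_pow_of_lintegral_rpow_le {Ω : Type*} [MeasurableSpace Ω]
    {μ : Measure Ω} {Z : ℕ → Ω → ℝ≥0∞} (hZ : ∀ N, AEMeasurable (Z N) μ) {β : ℝ} (hβ : 0 < β)
    {A B : ℝ≥0∞} (hB : B ≠ ∞) (hAB : A < B ^ β) (hmom : ∀ N, ∫⁻ a, Z N a ^ β ∂μ ≤ A ^ N) :
    ∀ᵐ a ∂μ, ∀ᶠ N in atTop, Z N a < B ^ N := by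
  have hBβ : B ^ β ≠ 0 := (zero_le.trans_lt hAB).ne'
  have hmarkov (N : ℕ) : μ {a | B ^ N ≤ Z N a} ≤ (A / B ^ β) ^ N :=
    calc μ {a | B ^ N ≤ Z N a} ≤ μ {a | (B ^ β) ^ N ≤ Z N a ^ β} := by
          refine measure_mono fun a (ha : B ^ N ≤ Z N a) => ?_
          rw [Set.mem_ofPred_eq, ← ENNReal.rpow_mul_natCast, mul_comm, ENNReal.rpow_natCast_mul]
          exact ENNReal.rpow_le_rpow ha hβ.le
      _ ≤ (∫⁻ a, Z N a ^ β ∂μ) / (B ^ β) ^ N :=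
          meas_ge_le_lintegral_div ((hZ N).pow_const β) (pow_ne_zero N hBβ)
            (ENNReal.pow_ne_top (ENNReal.rpow_ne_top_of_nonneg hβ.le hB))
      _ ≤ A ^ N / (B ^ β) ^ N := ENNReal.div_le_div_right (hmom N) _
      _ = (A / B ^ β) ^ N := by rw [div_eq_mul_inv, div_eq_mul_inv, ENNReal.inv_pow, mul_pow]
  have hratio : A / B ^ β < 1 := ENNReal.div_lt_of_lt_mul (by rwa [one_mul])
  have hsum : ∑' N, μ {a | B ^ N ≤ Z N a} ≠ ∞ := by
    refine ne_top_of_le_ne_top ?_ (ENNReal.tsum_le_tsum hmarkov)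
    rw [ENNReal.tsum_geometric]
    exact ENNReal.inv_ne_top.2 (tsub_pos_of_lt hratio).ne'
  filter_upwards [ae_eventually_notMem hsum] with a ha
  exact ha.mono fun N hN => not_le.1 hN

lemma identDistrib_of_measure_eq_true {Ω : Type*} [MeasurableSpace Ω] {μ : Measure Ω}
    [IsProbabilityMeasure μ] {X Y : Ω → Bool} (hX : Measurable X) (hY : Measurable Y)
    (h : μ {a | X a = true} = μ {a | Y a = true}) : IdentDistrib X Y μ μ := by
  refine ⟨hX.aemeasurable, hY.aemeasurable, Measure.ext_iff_singleton.2 fun b => ?_⟩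
  rw [Measure.map_apply hX (measurableSet_singleton b),
    Measure.map_apply hY (measurableSet_singleton b)]
  cases b
  · have hfalse (Z : Ω → Bool) : Z ⁻¹' {false} = {a | Z a = true}ᶜ := by ext; simp
    have hmeas (Z : Ω → Bool) (hZ : Measurable Z) : MeasurableSet {a | Z a = true} :=
      hZ (measurableSet_singleton true)
    rw [hfalse, hfalse, prob_compl_eq_one_sub (hmeas X hX), prob_compl_eq_one_sub (hmeas Y hY), h]
  · exact h

/-- Without the lower bound `-C` the real `limsup` could be a junk value (an unbounded-below
sequence has `limsup = 0`), and `Real.log 0 = 0`. -/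
lemma limsup_log_toReal_div_le {x : ℕ → ℝ≥0∞} {d : ℝ} (hx : ∀ N, x N ≠ ∞)
    (hlow : ∃ C : ℝ, ∀ᶠ N : ℕ in atTop, ENNReal.ofReal (Real.exp (-(C * N))) ≤ x N)
    (hup : ∀ c : ℚ, d < c → ∀ᶠ N in atTop, x N < ENNReal.ofReal (Real.exp c) ^ N) :
    limsup (fun N : ℕ => Real.log (x N).toReal / N) atTop ≤ d := by
  obtain ⟨C, hC⟩ := hlow
  have hbdd : ∀ᶠ N : ℕ in atTop, 0 < (x N).toReal ∧ -C ≤ Real.log (x N).toReal / N := by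
    filter_upwards [hC, eventually_gt_atTop 0] with N hN hN0
    have hle := (ENNReal.ofReal_le_iff_le_toReal (hx N)).1 hN
    refine ⟨(Real.exp_pos _).trans_le hle, ?_⟩
    rw [le_div_iff₀ (Nat.cast_pos.2 hN0)]
    have := Real.log_le_log (Real.exp_pos _) hle
    rw [Real.log_exp] at this
    linarith
  refine le_of_forall_lt_rat_imp_le fun c hc => limsup_le_of_le
    (isCoboundedUnder_le_of_eventually_le _ (hbdd.mono fun N h => h.2)) ?_
  filter_upwards [hbdd, hup c hc, eventually_gt_atTop 0] with N hN hNc hN0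
  rw [← ENNReal.ofReal_pow (Real.exp_pos c).le, ← Real.exp_nat_mul] at hNc
  rw [div_le_iff₀ (Nat.cast_pos.2 hN0), mul_comm]
  exact ((Real.log_lt_iff_lt_exp hN.1).2 (ENNReal.toReal_lt_of_lt_ofReal hNc)).le

lemma le_of_continuousAt_of_forall_rat_mem_Ioo_le {f : ℝ → ℝ} {a b y : ℝ} (hab : a < b)
    (hf : ContinuousAt f b) (h : ∀ q : ℚ, (q : ℝ) ∈ Set.Ioo a b → y ≤ f q) : y ≤ f b := by
  have hb : b ∈ closure (Set.Ioo a b ∩ Set.range ((↑) : ℚ → ℝ)) := by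
    refine closure_minimal (Rat.denseRange_cast.open_subset_closure_inter isOpen_Ioo)
      isClosed_closure ?_
    rw [closure_Ioo hab.ne]
    exact Set.right_mem_Icc.2 hab.le
  refine ContinuousWithinAt.closure_le hb continuousWithinAt_const hf.continuousWithinAt ?_
  rintro _ ⟨hmem, q, rfl⟩
  exact h q hmem

lemma summable_zetaR_terms {s : ℝ} (hs : 1 < s) :
    Summable fun n : ℕ => ((n + 1 : ℕ) : ℝ) ^ (-s) :=
  (summable_nat_add_iff 1).2 (Real.summable_nat_rpow.2 (by linarith))

lemma zetaR_pos {s : ℝ} (hs : 1 < s) : 0 < zetaR s :=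
  (summable_zetaR_terms hs).tsum_pos (fun _ => by positivity) 0 (by positivity)

lemma ofReal_zetaR {s : ℝ} (hs : 1 < s) :
    ENNReal.ofReal (zetaR s) = ∑' n : ℕ, ((n + 1 : ℕ) : ℝ≥0∞) ^ (-s) := by
  rw [zetaR, ENNReal.ofReal_tsum_of_nonneg (fun _ => by positivity) (summable_zetaR_terms hs)]
  refine tsum_congr fun n => ?_
  rw [← ENNReal.ofReal_rpow_of_pos (by positivity), ENNReal.ofReal_natCast]

lemma continuousAt_zetaR {s : ℝ} (hs : 1 < s) : ContinuousAt zetaR s := by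
  obtain ⟨r, hr1, hrs⟩ := exists_between hs
  refine (continuousOn_tsum (fun n => ?_) (summable_zetaR_terms hr1) fun n x hx => ?_
    ).continuousAt (Ici_mem_nhds hrs)
  · exact (continuous_const.rpow continuous_neg fun _ => Or.inl (by positivity)).continuousOn
  · rw [Real.norm_of_nonneg (by positivity)]
    exact Real.rpow_le_rpow_of_exponent_le (by simp) (neg_le_neg hx)

lemma prevJ_zero {n : ℕ} (j : Fin (n + 1) → ℕ) : prevJ j 0 = 0 := rfl

lemma prevJ_succ {n : ℕ} (j : Fin (n + 1) → ℕ) (i : Fin n) : prevJ j i.succ = j i.castSucc := by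
  simp [prevJ]
  rfl

lemma prevJ_shift (s : ℕ → ℕ) (hs : s 0 = 0) {N : ℕ} (i : Fin N) :
    prevJ (fun i : Fin N => s (i + 1)) i = s i := by
  unfold prevJ
  split_ifs with h
  · rw [h, hs]
  · show s ((i : ℕ) - 1 + 1) = s i
    rw [Nat.sub_add_cancel (Nat.pos_of_ne_zero h)]

lemma strictMono_of_prevJ_lt {N : ℕ} {j : Fin N → ℕ} (hj : ∀ i, prevJ j i < j i) :
    StrictMono j := by
  cases N with
  | zero => exact fun i => i.elim0
  | succ n => exact Fin.strictMono_iff_lt_succ.2 fun i => prevJ_succ j i ▸ hj i.succ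

lemma eq_of_prevJ_lt_of_gaps_eq {N : ℕ} {j j' : Fin N → ℕ} (hj : ∀ i, prevJ j i < j i)
    (hj' : ∀ i, prevJ j' i < j' i) (h : ∀ i, j i - prevJ j i = j' i - prevJ j' i) : j = j' := by
  cases N with
  | zero => exact funext fun i => i.elim0
  | succ n =>
    funext i
    induction i using Fin.induction with
    | zero =>
      have hgap := h 0
      simp only [prevJ_zero] at hgap
      omega
    | succ i ih =>
      have hgap := h i.succ
      have hlt := hj i.succ
      have hlt' := hj' i.succ
      simp only [prevJ_succ, ih] at hgap hlt hlt'
      omega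

def gapWeight (s : ℝ) {N : ℕ} (j : Fin N → ℕ) : ℝ≥0∞ :=
  if ∀ i, prevJ j i < j i then ∏ i, ((j i - prevJ j i : ℕ) : ℝ≥0∞) ^ (-s) else 0

lemma gapWeight_rpow (s : ℝ) {β : ℝ} (hβ : 0 < β) {N : ℕ} (j : Fin N → ℕ) :
    gapWeight s j ^ β = gapWeight (s * β) j := by
  unfold gapWeight
  split_ifs
  · rw [← ENNReal.prod_rpow_of_nonneg hβ.le]
    simp only [← ENNReal.rpow_mul, neg_mul]
  · exact ENNReal.zero_rpow_of_pos hβ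

lemma tsum_gapWeight_le (s : ℝ) (N : ℕ) :
    ∑' j : Fin N → ℕ, gapWeight s j ≤ (∑' n : ℕ, ((n + 1 : ℕ) : ℝ≥0∞) ^ (-s)) ^ N := by
  let gaps (j : {j : Fin N → ℕ // ∀ i, prevJ j i < j i}) : Fin N → ℕ :=
    fun i => j.1 i - prevJ j.1 i - 1
  have hgaps : Function.Injective gaps := fun j j' h => Subtype.ext <|
    eq_of_prevJ_lt_of_gaps_eq j.2 j'.2 fun i => by
      have hgap : j.1 i - prevJ j.1 i - 1 = j'.1 i - prevJ j'.1 i - 1 := congrFun h i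
      have hlt := j.2 i
      have hlt' := j'.2 i
      omega
  calc ∑' j : Fin N → ℕ, gapWeight s j
      = ∑' j : {j : Fin N → ℕ // ∀ i, prevJ j i < j i},
          ∏ i, ((gaps j i + 1 : ℕ) : ℝ≥0∞) ^ (-s) := by
        refine Eq.trans (tsum_congr fun j => ?_)
          (tsum_subtype {j : Fin N → ℕ | ∀ i, prevJ j i < j i}
            fun j => ∏ i, ((j i - prevJ j i - 1 + 1 : ℕ) : ℝ≥0∞) ^ (-s)).symm
        by_cases hj : ∀ i, prevJ j i < j i
        · rw [Set.indicator_of_mem (s := {j | ∀ i, prevJ j i < j i}) hj, gapWeight, if_pos hj]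
          refine Finset.prod_congr rfl fun i _ => ?_
          have := hj i
          congr 3
          omega
        · rw [Set.indicator_of_notMem (s := {j | ∀ i, prevJ j i < j i}) hj, gapWeight,
            if_neg hj]
    _ ≤ ∑' g : Fin N → ℕ, ∏ i, ((g i + 1 : ℕ) : ℝ≥0∞) ^ (-s) :=
        ENNReal.tsum_comp_le_tsum_of_injective hgaps _
    _ = _ := ENNReal.tsum_pi_prod_eq_pow (fun n => ((n + 1 : ℕ) : ℝ≥0∞) ^ (-s)) N

lemma SN_eq_tsum (α : ℝ) (N : ℕ) (ω : ℕ → Bool) :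
    SN α N ω = ∑' j : Fin N → ℕ, if ∀ i, ω (j i) = true then gapWeight α j else 0 := by
  simp only [SN, gapWeight, and_comm (a := ∀ i, prevJ _ i < _), ite_and]

lemma SN_le_pow (α : ℝ) (N : ℕ) (ω : ℕ → Bool) :
    SN α N ω ≤ (∑' n : ℕ, ((n + 1 : ℕ) : ℝ≥0∞) ^ (-α)) ^ N := by
  refine (SN_eq_tsum α N ω).trans_le <| (ENNReal.tsum_le_tsum fun j => ?_).trans
    (tsum_gapWeight_le α N)
  split_ifs
  exacts [le_rfl, zero_le]

lemma SN_ne_top {α : ℝ} (hα : 1 < α) (N : ℕ) (ω : ℕ → Bool) : SN α N ω ≠ ∞ :=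
  ne_top_of_le_ne_top (ENNReal.pow_ne_top (ofReal_zetaR hα ▸ ENNReal.ofReal_ne_top))
    (SN_le_pow α N ω)

lemma ofReal_exp_neg_mul_le_rpow_neg {α : ℝ} (hα : 0 ≤ α) {n : ℕ} (hn : 0 < n) :
    ENNReal.ofReal (Real.exp (-(α * n))) ≤ (n : ℝ≥0∞) ^ (-α) := by
  have hn' : (0 : ℝ) < n := Nat.cast_pos.2 hn
  rw [← ENNReal.ofReal_natCast, ENNReal.ofReal_rpow_of_pos hn', Real.rpow_def_of_pos hn']
  refine ENNReal.ofReal_le_ofReal (Real.exp_le_exp.2 ?_)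
  nlinarith [Real.log_le_self hn'.le]

/-- Only the term `j = (s 1, …, s N)` is kept; a gap `n` contributes `n^{-α} ≥ e^{-α n}`. -/
lemma exp_neg_le_SN {α : ℝ} (hα : 0 ≤ α) {ω : ℕ → Bool} {s : ℕ → ℕ} (hs : StrictMono s)
    (hs0 : s 0 = 0) (hω : ∀ k, ω (s (k + 1)) = true) (N : ℕ) :
    ENNReal.ofReal (Real.exp (-(α * s N))) ≤ SN α N ω := by
  let j : Fin N → ℕ := fun i => s (i + 1)
  have hprev : ∀ i, prevJ j i = s i := prevJ_shift s hs0
  have hj : ∀ i, prevJ j i < j i := fun i => (hprev i).symm ▸ hs (Nat.lt_succ_self i)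
  have htelescope : ∑ i : Fin N, ((s (i + 1) - s i : ℕ) : ℝ) = s N := by
    rw [← Nat.cast_sum, Fin.sum_univ_eq_sum_range (fun i => s (i + 1) - s i),
      Finset.sum_range_tsub hs.monotone, hs0, Nat.sub_zero]
  calc ENNReal.ofReal (Real.exp (-(α * s N)))
      = ∏ i : Fin N, ENNReal.ofReal (Real.exp (-(α * (s (i + 1) - s i : ℕ)))) := by
        rw [← ENNReal.ofReal_prod_of_nonneg fun _ _ => (Real.exp_pos _).le, ← Real.exp_sum,
          ← htelescope, Finset.mul_sum, Finset.sum_neg_distrib]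
    _ ≤ ∏ i, ((j i - prevJ j i : ℕ) : ℝ≥0∞) ^ (-α) := Finset.prod_le_prod' fun i _ => by
        rw [hprev]
        exact ofReal_exp_neg_mul_le_rpow_neg hα (Nat.sub_pos_of_lt (hs (Nat.lt_succ_self i)))
    _ ≤ SN α N ω := by
        rw [SN]
        refine le_of_eq_of_le ?_ (ENNReal.le_tsum j)
        exact (if_pos ⟨hj, fun i => hω i⟩).symm

lemma exists_renewal_le_of_tendsto_count_div {ω : ℕ → Bool} {p : ℝ} (hp : 0 < p)
    (h : Tendsto (fun n : ℕ => (Nat.count (fun l => ω l = true) n : ℝ) / n) atTop (𝓝 p)) :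
    ∃ s : ℕ → ℕ, StrictMono s ∧ s 0 = 0 ∧ (∀ k, ω (s (k + 1)) = true) ∧
      ∀ᶠ N in atTop, (s N : ℝ) ≤ 2 / p * N := by
  let r : ℕ → Prop := fun l => l = 0 ∨ ω l = true
  have hdense : ∀ᶠ n : ℕ in atTop, p / 2 * n ≤ Nat.count (fun l => ω l = true) n := by
    filter_upwards [(tendsto_order.1 h).1 _ (half_lt_self hp), eventually_gt_atTop 0]
      with n hn hn0
    exact ((lt_div_iff₀ (Nat.cast_pos.2 hn0)).1 hn).le
  have hcount (n : ℕ) : Nat.count (fun l => ω l = true) n ≤ Nat.count r n :=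
    Nat.count_mono_left fun _ _ hk => Or.inr hk
  have hinf : (Set.ofPred r).Infinite := by
    intro hfin
    have hbig := (tendsto_natCast_atTop_atTop.const_mul_atTop (half_pos hp)).eventually_gt_atTop
      (hfin.toFinset.card : ℝ)
    obtain ⟨n, hn, hbig⟩ := (hdense.and hbig).exists
    have := (Nat.cast_le (α := ℝ)).2 ((hcount n).trans (Nat.count_le_card hfin n))
    linarith
  have hmono := Nat.nth_strictMono hinf
  have hzero : Nat.nth r 0 = 0 := Nat.nth_zero_of_zero (Or.inl rfl)
  refine ⟨Nat.nth r, hmono, hzero, fun k => ?_, ?_⟩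
  · exact (Nat.nth_mem_of_infinite hinf (k + 1)).resolve_left (hzero ▸ hmono k.succ_pos).ne'
  · filter_upwards [hmono.tendsto_atTop.eventually hdense] with N hN
    have hN' : (Nat.count (fun l => ω l = true) (Nat.nth r N) : ℝ) ≤ N := by
      exact_mod_cast (hcount _).trans (Nat.count_nth_of_infinite hinf N).le
    rw [div_mul_eq_mul_div, le_div_iff₀ hp]
    linarith

section Bernoulli

variable {Ω : Type*} [MeasurableSpace Ω] {μ : Measure Ω} {X : ℕ → Ω → Bool}

lemma measurableSet_forall_eq_true (hmeas : ∀ l, Measurable (X l)) {N : ℕ} (j : Fin N → ℕ) :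
    MeasurableSet {a | ∀ i, X (j i) a = true} := by
  simp only [Set.ofPred_forall]
  exact MeasurableSet.iInter fun i => hmeas (j i) (measurableSet_singleton true)

lemma measure_forall_eq_true (hindep : iIndepFun X μ) {q : ℝ≥0∞}
    (hX : ∀ l, μ {a | X l a = true} = q) {N : ℕ} {j : Fin N → ℕ} (hj : Function.Injective j) :
    μ {a | ∀ i, X (j i) a = true} = q ^ N := by
  have := (hindep.precomp hj).meas_iInter (s := fun i => {a | X (j i) a = true}) fun i =>
    ⟨{true}, measurableSet_singleton true, rfl⟩
  simp [Set.ofPred_forall, this, hX]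

lemma measurable_SN (hmeas : ∀ l, Measurable (X l)) (α : ℝ) (N : ℕ) :
    Measurable fun a => SN α N (fun l => X l a) := by
  simp only [SN_eq_tsum]
  exact Measurable.tsum fun j =>
    Measurable.ite (measurableSet_forall_eq_true hmeas j) measurable_const measurable_const

theorem lintegral_SN_rpow_le (hmeas : ∀ l, Measurable (X l)) (hindep : iIndepFun X μ)
    {q : ℝ≥0∞} (hX : ∀ l, μ {a | X l a = true} = q) (α : ℝ) {β : ℝ} (hβ0 : 0 < β)
    (hβ1 : β ≤ 1) (N : ℕ) :
    ∫⁻ a, SN α N (fun l => X l a) ^ β ∂μ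
      ≤ (q * ∑' n : ℕ, ((n + 1 : ℕ) : ℝ≥0∞) ^ (-(α * β))) ^ N := by
  let E (j : Fin N → ℕ) : Set Ω := {a | ∀ i, X (j i) a = true}
  have hpt (a : Ω) : SN α N (fun l => X l a) ^ β
      ≤ ∑' j : Fin N → ℕ, (E j).indicator (fun _ => gapWeight (α * β) j) a := by
    rw [SN_eq_tsum]
    refine (ENNReal.tsum_rpow_le_tsum_rpow _ hβ0 hβ1).trans_eq (tsum_congr fun j => ?_)
    by_cases ha : ∀ i, X (j i) a = true
    · rw [if_pos ha, Set.indicator_of_mem (show a ∈ E j from ha), gapWeight_rpow α hβ0]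
    · rw [if_neg ha, Set.indicator_of_notMem (show a ∉ E j from ha),
        ENNReal.zero_rpow_of_pos hβ0]
  calc ∫⁻ a, SN α N (fun l => X l a) ^ β ∂μ
      ≤ ∫⁻ a, ∑' j : Fin N → ℕ, (E j).indicator (fun _ => gapWeight (α * β) j) a ∂μ :=
        lintegral_mono hpt
    _ = ∑' j : Fin N → ℕ, gapWeight (α * β) j * μ (E j) := by
        rw [lintegral_tsum fun j =>
          (measurable_const.indicator (measurableSet_forall_eq_true hmeas j)).aemeasurable]
        exact tsum_congr fun j =>
          lintegral_indicator_const (measurableSet_forall_eq_true hmeas j) _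
    _ = ∑' j : Fin N → ℕ, gapWeight (α * β) j * q ^ N := by
        refine tsum_congr fun j => ?_
        by_cases hj : ∀ i, prevJ j i < j i
        · rw [measure_forall_eq_true hindep hX (strictMono_of_prevJ_lt hj).injective]
        · simp only [gapWeight, if_neg hj, zero_mul]
    _ ≤ _ := by
        rw [ENNReal.tsum_mul_right, mul_pow, mul_comm]
        gcongr
        exact tsum_gapWeight_le _ _

theorem ae_eventually_SN_lt (hmeas : ∀ l, Measurable (X l)) (hindep : iIndepFun X μ) {p : ℝ}
    (hp : 0 < p) (hX : ∀ l, μ {a | X l a = true} = ENNReal.ofReal p) {α : ℝ} (hα : 1 < α)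
    {β : ℝ} (hβ : β ∈ Set.Ioc (1 / α) 1) {c : ℝ}
    (hc : 1 / β * (Real.log p + Real.log (zetaR (α * β))) < c) :
    ∀ᵐ a ∂μ, ∀ᶠ N in atTop, SN α N (fun l => X l a) < ENNReal.ofReal (Real.exp c) ^ N := by
  have hα0 : 0 < α := one_pos.trans hα
  have hβ0 : 0 < β := (one_div_pos.2 hα0).trans hβ.1
  have hαβ : 1 < α * β := by rw [mul_comm, ← div_lt_iff₀ hα0]; exact hβ.1
  refine ae_eventually_lt_pow_of_lintegral_rpow_le
    (fun N => (measurable_SN hmeas α N).aemeasurable) hβ0 ENNReal.ofReal_ne_top ?_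
    (lintegral_SN_rpow_le hmeas hindep hX α hβ0 hβ.2)
  rw [← ofReal_zetaR hαβ, ← ENNReal.ofReal_mul hp.le,
    ENNReal.ofReal_rpow_of_pos (Real.exp_pos c), ← Real.exp_mul,
    ENNReal.ofReal_lt_ofReal_iff (Real.exp_pos _),
    ← Real.log_lt_iff_lt_exp (mul_pos hp (zetaR_pos hαβ)),
    Real.log_mul hp.ne' (zetaR_pos hαβ).ne']
  rwa [one_div, inv_mul_lt_iff₀ hβ0, mul_comm β c] at hc

theorem ae_tendsto_count_div [IsProbabilityMeasure μ] (hmeas : ∀ l, Measurable (X l))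
    (hindep : iIndepFun X μ) {p : ℝ} (hp : 0 ≤ p)
    (hX : ∀ l, μ {a | X l a = true} = ENNReal.ofReal p) :
    ∀ᵐ a ∂μ, Tendsto (fun n : ℕ => (Nat.count (fun l => X l a = true) n : ℝ) / n) atTop
      (𝓝 p) := by
  let g : Bool → ℝ := fun b => if b = true then 1 else 0
  have hg : Measurable g := measurable_of_countable g
  have hY0 : g ∘ X 0 = {a | X 0 a = true}.indicator 1 := by
    ext a; simp [g, Set.indicator_apply]
  have hset : MeasurableSet {a | X 0 a = true} := hmeas 0 (measurableSet_singleton true)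
  have hint : Integrable (g ∘ X 0) μ := hY0 ▸ (integrable_const 1).indicator hset
  have hmean : ∫ a, (g ∘ X 0) a ∂μ = p := by
    rw [hY0, integral_indicator_one hset, measureReal_def, hX, ENNReal.toReal_ofReal hp]
  have hslln := strong_law_ae (fun l => g ∘ X l) hint
    (fun i j hij => (hindep.comp (fun _ => g) fun _ => hg).indepFun hij)
    (fun l => (identDistrib_of_measure_eq_true (hmeas l) (hmeas 0) (by rw [hX, hX])).comp hg)
  filter_upwards [hslln] with a ha
  rw [hmean] at ha
  refine ha.congr fun n => ?_
  simp [g, Nat.count_eq_card_filter_range, Finset.sum_boole, div_eq_inv_mul]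

theorem ae_exists_exp_neg_le_SN [IsProbabilityMeasure μ] (hmeas : ∀ l, Measurable (X l))
    (hindep : iIndepFun X μ) {p : ℝ} (hp : 0 < p)
    (hX : ∀ l, μ {a | X l a = true} = ENNReal.ofReal p) {α : ℝ} (hα : 0 ≤ α) :
    ∀ᵐ a ∂μ, ∃ C : ℝ, ∀ᶠ N : ℕ in atTop,
      ENNReal.ofReal (Real.exp (-(C * N))) ≤ SN α N (fun l => X l a) := by
  filter_upwards [ae_tendsto_count_div hmeas hindep hp.le hX] with a ha
  obtain ⟨s, hs, hs0, hω, hle⟩ := exists_renewal_le_of_tendsto_count_div hp ha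
  refine ⟨α * (2 / p), hle.mono fun N hN => le_trans ?_ (exp_neg_le_SN hα hs hs0 hω N)⟩
  refine ENNReal.ofReal_le_ofReal (Real.exp_le_exp.2 (neg_le_neg ?_))
  rw [mul_assoc]
  exact mul_le_mul_of_nonneg_left hN hα

end Bernoulli

/-- **Almost sure limsup bound**: a.s., for every `β ∈ (1/α, 1]`,
`limsup (1/N) log S_N(ω) ≤ (1/β)(log p + log ζ(αβ))`. -/
theorem limsup_log_SN_le
    {Ω : Type*} [MeasurableSpace Ω] (μ : Measure Ω) [IsProbabilityMeasure μ]
    (X : ℕ → Ω → Bool)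
    (hmeas : ∀ l, Measurable (X l))
    (hindep : iIndepFun X μ)
    (p : ℝ) (hp : p ∈ Set.Ioo (0 : ℝ) 1)
    (hX : ∀ l, μ {a | X l a = true} = ENNReal.ofReal p)
    (α : ℝ) (hα : 1 < α) :
    ∀ᵐ a ∂μ, ∀ β ∈ Set.Ioc (1 / α) (1 : ℝ),
      Filter.limsup
        (fun N : ℕ => Real.log ((SN α N (fun l => X l a)).toReal) / N) atTop
        ≤ (1 / β) * (Real.log p + Real.log (zetaR (α * β))) := by
  have hα0 : 0 < α := one_pos.trans hα
  have hup : ∀ᵐ a ∂μ, ∀ q c : ℚ, (q : ℝ) ∈ Set.Ioc (1 / α) 1 →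
      1 / (q : ℝ) * (Real.log p + Real.log (zetaR (α * q))) < c →
      ∀ᶠ N in atTop, SN α N (fun l => X l a) < ENNReal.ofReal (Real.exp c) ^ N := by
    simp only [ae_all_iff, eventually_imp_distrib_left]
    exact fun q c hq hc => ae_eventually_SN_lt hmeas hindep hp.1 hX hα hq hc
  filter_upwards [hup, ae_exists_exp_neg_le_SN hmeas hindep hp.1 hX hα0.le] with a hup hlow β hβ
  have hβ0 : 0 < β := (one_div_pos.2 hα0).trans hβ.1
  have hαβ : 1 < α * β := by rw [mul_comm, ← div_lt_iff₀ hα0]; exact hβ.1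
  refine le_of_continuousAt_of_forall_rat_mem_Ioo_le
    (f := fun b => 1 / b * (Real.log p + Real.log (zetaR (α * b)))) hβ.1 ?_ fun q hq => ?_
  · have hzeta := (continuousAt_zetaR hαβ).comp (continuous_const_mul α).continuousAt
    exact (continuousAt_const.div continuousAt_id hβ0.ne').mul
      (continuousAt_const.add (hzeta.log (zetaR_pos hαβ).ne'))
  · exact limsup_log_toReal_div_le (SN_ne_top hα · _) hlow
      fun c hc => hup q c ⟨hq.1, hq.2.le.trans hβ.2⟩ hc

end
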